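/- arXiv:1804.01172 — 6 statements merged into one kernel-verified Lean document; each statement's English description precedes it below -/
import Mathlib

section
/- Let n be a natural number and let A, B, C, D be n×n matrices with entries in {±1} such that (1) A, B, C, and D are symmetric, (2) A, B, C, and D commute pairwise, and (3) A² + B² + C² + D² = 4n·Iₙ, where Iₙ is the identity matrix of order n. Then the 4n×4n block matrix H = [[A, B, C, D], [−B, A, −D, C], [−C, D, A, −B], [−D, −C, B, A]] is a Hadamard matrix of order 4n, i.e., H has entries in {±1} and H·Hᵀ = 4n·I₄ₙ. -/
open Matrix

variable {ι R : Type*}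

def williamsonArray [Neg R] (A B C D : Matrix ι ι R) :
    Matrix ((ι ⊕ ι) ⊕ (ι ⊕ ι)) ((ι ⊕ ι) ⊕ (ι ⊕ ι)) R :=
  fromBlocks (fromBlocks A B (-B) A) (fromBlocks C D (-D) C)
    (fromBlocks (-C) D (-D) (-C)) (fromBlocks A (-B) B A)

theorem williamsonArray_apply_mem [InvolutiveNeg R] {s : Set R} (hs : ∀ x ∈ s, -x ∈ s)
    {A B C D : Matrix ι ι R} (hA : ∀ i j, A i j ∈ s) (hB : ∀ i j, B i j ∈ s)
    (hC : ∀ i j, C i j ∈ s) (hD : ∀ i j, D i j ∈ s) :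
    ∀ i j, williamsonArray A B C D i j ∈ s := by
  rintro ((i | i) | (i | i)) ((j | j) | (j | j)) <;>
    simp only [williamsonArray, fromBlocks_apply₁₁, fromBlocks_apply₁₂, fromBlocks_apply₂₁,
      fromBlocks_apply₂₂] <;>
    first
      | exact hA i j | exact hB i j | exact hC i j | exact hD i j
      | exact hs _ (hB i j) | exact hs _ (hC i j) | exact hs _ (hD i j)

/-- The off-diagonal blocks of `W * Wᵀ` cancel in pairs because the blocks commute and are
symmetric. -/
theorem williamsonArray_mul_transpose [Fintype ι] [Ring R] {A B C D : Matrix ι ι R}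
    (hAs : A.IsSymm) (hBs : B.IsSymm) (hCs : C.IsSymm) (hDs : D.IsSymm)
    (hAB : Commute A B) (hAC : Commute A C) (hAD : Commute A D)
    (hBC : Commute B C) (hBD : Commute B D) (hCD : Commute C D) :
    let S := A * A + B * B + C * C + D * D
    williamsonArray A B C D * (williamsonArray A B C D)ᵀ =
      fromBlocks (fromBlocks S 0 0 S) 0 0 (fromBlocks S 0 0 S) := by
  simp only [williamsonArray, fromBlocks_transpose, fromBlocks_multiply, transpose_neg,
    hAs.eq, hBs.eq, hCs.eq, hDs.eq, fromBlocks_add, ← fromBlocks_zero, fromBlocks_inj,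
    Matrix.mul_neg, Matrix.neg_mul, neg_neg, hAB.eq, hAC.eq, hAD.eq, hBC.eq, hBD.eq, hCD.eq]
  and_intros <;> abel

theorem williamson_construction_hadamard (n : ℕ)
    (A B C D : Matrix (Fin n) (Fin n) ℤ)
    (hA : ∀ i j, A i j = 1 ∨ A i j = -1) (hB : ∀ i j, B i j = 1 ∨ B i j = -1)
    (hC : ∀ i j, C i j = 1 ∨ C i j = -1) (hD : ∀ i j, D i j = 1 ∨ D i j = -1)
    (hAs : Aᵀ = A) (hBs : Bᵀ = B) (hCs : Cᵀ = C) (hDs : Dᵀ = D)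
    (hAB : A * B = B * A) (hAC : A * C = C * A) (hAD : A * D = D * A)
    (hBC : B * C = C * B) (hBD : B * D = D * B) (hCD : C * D = D * C)
    (hsum : A ^ 2 + B ^ 2 + C ^ 2 + D ^ 2 = (4 * (n : ℤ)) • (1 : Matrix (Fin n) (Fin n) ℤ)) :
    let H : Matrix ((Fin n ⊕ Fin n) ⊕ (Fin n ⊕ Fin n)) ((Fin n ⊕ Fin n) ⊕ (Fin n ⊕ Fin n)) ℤ :=
      Matrix.fromBlocks
        (Matrix.fromBlocks A B (-B) A)
        (Matrix.fromBlocks C D (-D) C)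
        (Matrix.fromBlocks (-C) D (-D) (-C))
        (Matrix.fromBlocks A (-B) B A)
    (∀ i j, H i j = 1 ∨ H i j = -1) ∧
      H * Hᵀ = (4 * (n : ℤ)) • (1 : Matrix ((Fin n ⊕ Fin n) ⊕ (Fin n ⊕ Fin n)) ((Fin n ⊕ Fin n) ⊕ (Fin n ⊕ Fin n)) ℤ) := by
  show (∀ i j, williamsonArray A B C D i j ∈ ({1, -1} : Set ℤ)) ∧
    williamsonArray A B C D * (williamsonArray A B C D)ᵀ = _
  refine ⟨williamsonArray_apply_mem (by simp [or_comm]) hA hB hC hD, ?_⟩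
  rw [williamsonArray_mul_transpose hAs hBs hCs hDs hAB hAC hAD hBC hBD hCD, ← sq, ← sq, ← sq,
    ← sq, hsum]
  simp only [← fromBlocks_one, fromBlocks_smul, smul_zero]
end

section
/- Let A, B, C, D be symmetric sequences of length n with entries in {±1}, and let Mᴬ, Mᴮ, Mᶜ, Mᴰ be the circulant matrices whose first rows are A, B, C, D respectively. Then Mᴬ² + Mᴮ² + Mᶜ² + Mᴰ² = 4n·Iₙ if and only if PAF_A(s) + PAF_B(s) + PAF_C(s) + PAF_D(s) = 0 for all s = 1, …, ⌊n/2⌋. -/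
/-- The periodic autocorrelation function of the length-`n` sequence `a`. -/
def paf (n : ℕ) (a : ℕ → ℤ) (s : ℕ) : ℤ :=
  ∑ k ∈ Finset.range n, a k * a ((k + s) % n)

/-- `a` is a symmetric sequence of length `n`: `aᵢ = a_{n-i}` for `1 ≤ i < n`. -/
def SymmSeq (n : ℕ) (a : ℕ → ℤ) : Prop := ∀ i, 1 ≤ i → i < n → a i = a (n - i)

/-- All entries of the length-`n` sequence `a` are `±1`. -/
def PMOne (n : ℕ) (a : ℕ → ℤ) : Prop := ∀ i < n, a i = 1 ∨ a i = -1

/-- The circulant matrix whose first row is the length-`n` sequence `a`: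
its `(i,j)` entry is `a_{(j-i) mod n}`. -/
def circMat (n : ℕ) (a : ℕ → ℤ) : Matrix (Fin n) (Fin n) ℤ :=
  fun i j => a ((n + j.val - i.val) % n)

/-!
Symmetry of `A` says that `k ↦ a_k` is an even function on `Fin n`, so `Mᴬ` is the circulant
matrix of `A`, and the square of the circulant matrix of an even function `v` is the circulant
matrix of its autocorrelation `t ↦ ∑ₘ v m * v (m + t)`, which is `PAF_A`. A circulant matrix is
determined by its first column, so the matrix identity says that the four autocorrelations sum to
`0` away from `0` and to `4n` at `0`; the latter holds for any `±1` sequences, and since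
`PAF(n - s) = PAF(s)` it suffices to check `1 ≤ s ≤ ⌊n/2⌋`.
-/

open Matrix

section Autocorrelation

variable {G R : Type*} [AddCommGroup G] [CommSemiring R]

theorem circulant_eq_smul_one_iff [DecidableEq G] (w : G → R) (k : R) :
    circulant w = k • (1 : Matrix G G R) ↔ w 0 = k ∧ ∀ t ≠ 0, w t = 0 := by
  rw [← circulant_single_one, ← circulant_smul, circulant_injective.eq_iff, ← Pi.single_smul,
    smul_eq_mul, mul_one, funext_iff]
  refine ⟨fun h => ⟨by simpa using h 0, fun t ht => by simpa [ht] using h t⟩, ?_⟩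
  rintro ⟨h0, h⟩ t
  by_cases ht : t = 0
  · simp [ht, h0]
  · simp [ht, h t ht]

variable [Fintype G]

def autocorr (v : G → R) (t : G) : R := ∑ m, v m * v (m + t)

theorem autocorr_neg (v : G → R) (t : G) : autocorr v (-t) = autocorr v t := by
  unfold autocorr
  rw [← Equiv.sum_comp (Equiv.addRight t)]
  simp [mul_comm]

theorem circulant_mulVec_self_of_even {v : G → R} (hv : v.Even) :
    circulant v *ᵥ v = autocorr v := by
  ext t
  simp only [mulVec, dotProduct, circulant_apply, autocorr]
  rw [← Equiv.sum_comp (Equiv.addRight t)]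
  refine Fintype.sum_congr _ _ fun m => ?_
  rw [Equiv.coe_addRight, ← hv, neg_sub, add_sub_cancel_right, mul_comm]

theorem circulant_sq_of_even [DecidableEq G] {v : G → R} (hv : v.Even) :
    circulant v ^ 2 = circulant (autocorr v) := by
  rw [sq, circulant_mul, circulant_mulVec_self_of_even hv]

end Autocorrelation

section Sequences

open Fin.NatCast Fin.CommRing

variable {n : ℕ} {a : ℕ → ℤ}

theorem SymmSeq.apply_val_neg [NeZero n] (hs : SymmSeq n a) (x : Fin n) :
    a (-x : Fin n) = a x := by
  rw [Fin.val_neg]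
  split_ifs with hx
  · simp [hx]
  · exact (hs x (Nat.one_le_iff_ne_zero.2 (Fin.val_ne_zero_iff.2 hx)) x.isLt).symm

theorem circMat_eq_circulant [NeZero n] (hs : SymmSeq n a) :
    circMat n a = circulant fun k : Fin n => a k := by
  ext i j
  rw [circulant_apply, ← hs.apply_val_neg, neg_sub, circMat, Fin.val_sub]
  congr 2
  omega

theorem paf_eq_autocorr [NeZero n] (a : ℕ → ℤ) (s : ℕ) :
    paf n a s = autocorr (fun k : Fin n => a k) (s : Fin n) := by
  rw [paf, autocorr, ← Fin.sum_univ_eq_sum_range (fun k => a k * a ((k + s) % n))]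
  simp [Fin.val_add, Fin.val_natCast]

theorem paf_sub_self [NeZero n] (a : ℕ → ℤ) {s : ℕ} (hs : s ≤ n) :
    paf n a (n - s) = paf n a s := by
  rw [paf_eq_autocorr, paf_eq_autocorr, Nat.cast_sub hs, Fin.natCast_self, zero_sub, autocorr_neg]

theorem circMat_sq [NeZero n] (hs : SymmSeq n a) :
    circMat n a ^ 2 = circulant fun t : Fin n => paf n a t := by
  simp only [circMat_eq_circulant hs,
    circulant_sq_of_even (v := fun k : Fin n => a k) hs.apply_val_neg, paf_eq_autocorr,
    Fin.cast_val_eq_self]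

theorem PMOne.paf_zero (hp : PMOne n a) : paf n a 0 = n := by
  calc paf n a 0 = ∑ _k ∈ Finset.range n, (1 : ℤ) := by
        refine Finset.sum_congr rfl fun k hk => ?_
        rw [add_zero, Nat.mod_eq_of_lt (Finset.mem_range.1 hk)]
        rcases hp k (Finset.mem_range.1 hk) with h | h <;> simp [h]
    _ = n := by simp

end Sequences

theorem forall_fin_ne_zero_iff_forall_le_half {M : Type*} {n : ℕ} [NeZero n] {Q : ℕ → M}
    {m : M} (hQ : ∀ s ≤ n, Q (n - s) = Q s) :
    (∀ t : Fin n, t ≠ 0 → Q t = m) ↔ ∀ s, 1 ≤ s → s ≤ n / 2 → Q s = m := by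
  constructor
  · intro h s hs1 hs2
    exact h ⟨s, by omega⟩ (Fin.ne_of_val_ne (by rw [Fin.val_mk, Fin.val_zero]; omega))
  · intro h t ht
    have ht1 : 1 ≤ (t : ℕ) := Nat.one_le_iff_ne_zero.2 (Fin.val_ne_zero_iff.2 ht)
    rcases le_or_gt (t : ℕ) (n / 2) with ht2 | ht2
    · exact h t ht1 ht2
    · rw [← hQ t t.isLt.le]
      exact h _ (by omega) (by omega)

theorem circulant_squares_iff_paf (n : ℕ) (a b c d : ℕ → ℤ)
    (hsa : SymmSeq n a) (hsb : SymmSeq n b) (hsc : SymmSeq n c) (hsd : SymmSeq n d)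
    (hpa : PMOne n a) (hpb : PMOne n b) (hpc : PMOne n c) (hpd : PMOne n d) :
    circMat n a ^ 2 + circMat n b ^ 2 + circMat n c ^ 2 + circMat n d ^ 2 =
        (4 * (n : ℤ)) • (1 : Matrix (Fin n) (Fin n) ℤ) ↔
      ∀ s, 1 ≤ s → s ≤ n / 2 → paf n a s + paf n b s + paf n c s + paf n d s = 0 := by
  rcases Nat.eq_zero_or_pos n with rfl | hn
  · exact ⟨fun _ _ h1 h2 => by omega, fun _ => Subsingleton.elim _ _⟩
  have : NeZero n := ⟨hn.ne'⟩
  rw [circMat_sq hsa, circMat_sq hsb, circMat_sq hsc, circMat_sq hsd, ← circulant_add,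
    ← circulant_add, ← circulant_add, circulant_eq_smul_one_iff]
  simp only [Pi.add_apply, Fin.val_zero, hpa.paf_zero, hpb.paf_zero, hpc.paf_zero, hpd.paf_zero]
  rw [and_iff_right (by ring)]
  exact forall_fin_ne_zero_iff_forall_le_half
    (Q := fun s => paf n a s + paf n b s + paf n c s + paf n d s) fun s hs => by
      simp only [paf_sub_self _ hs]
end

section
/- If A, B, C, D is a Williamson sequence of odd order n, then a_i·b_i·c_i·d_i = −a₀·b₀·c₀·d₀ for all indices i with 1 ≤ i < n/2. -/
/-- `a,b,c,d` are Williamson sequences of order `n`. -/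
def IsWilliamson (n : ℕ) (a b c d : ℕ → ℤ) : Prop :=
  SymmSeq n a ∧ SymmSeq n b ∧ SymmSeq n c ∧ SymmSeq n d ∧
  PMOne n a ∧ PMOne n b ∧ PMOne n c ∧ PMOne n d ∧
  ∀ s, 1 ≤ s → s ≤ n / 2 → paf n a s + paf n b s + paf n c s + paf n d s = 0

/-!
For a symmetric `±1` sequence `a` of odd length `n`, pair the terms of `PAF_a(s)` under
`x ↦ -x - s` on `ZMod n`. Writing `a_x a_{x+s} = (a_x - 1)(a_{x+s} - 1) + a_x + a_{x+s} - 1`, the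
products `(a_x - 1)(a_{x+s} - 1) ∈ {0, 4}` cancel in pairs modulo `8`, except at the unique fixed
point `z` (`2z + s ≡ 0`), so `PAF_a(s) ≡ 2 ∑ a - n + 2 - 2 a_z (mod 8)`. Choose `s ∈ [1, n/2]` with
`s ≡ ∓2i`, so that `a_z = a_i` by symmetry, and add the four congruences: the Williamson condition
gives `e_i ≡ ∑_k e_k + 2 (mod 4)` for `e = a + b + c + d`. Since `e` is symmetric with even
entries, `∑_k e_k ≡ e_0 (mod 4)`, hence `e_i - e_0 ≡ 2 (mod 4)`. Finally, four odd integers satisfy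
`x₁ + x₂ + x₃ + x₄ ≡ 3 + x₁x₂x₃x₄ (mod 4)`, so the products at `i` and at `0` differ by `2` modulo
`4`, i.e. have opposite signs.
-/

open Finset

theorem Fintype.sum_eq_apply_of_involutive {α M : Type*} [Fintype α] [DecidableEq α]
    [AddCommMonoid M] {σ : α → α} (hσ : Function.Involutive σ) {z : α}
    (hfix : ∀ x, σ x = x ↔ x = z) {g : α → M} (hg : ∀ x, x ≠ z → g x + g (σ x) = 0) :
    ∑ x, g x = g z := by
  suffices ∑ x ∈ univ.erase z, g x = 0 by rw [← add_sum_erase _ _ (mem_univ z), this, add_zero]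
  have hz : σ z = z := (hfix z).2 rfl
  refine sum_involution (fun x _ => σ x) (fun x hx => hg x (ne_of_mem_erase hx))
    (fun x hx _ h => ne_of_mem_erase hx ((hfix x).1 h)) (fun x hx => ?_) (fun x _ => hσ x)
  refine mem_erase.2 ⟨fun h => ne_of_mem_erase hx ?_, mem_univ _⟩
  rw [← hσ x, h, hz]

theorem Int.add_modEq_one_add_mul {x y : ℤ} (hx : Odd x) (hy : Odd y) :
    x + y ≡ 1 + x * y [ZMOD 4] := by
  obtain ⟨k, rfl⟩ := hx
  obtain ⟨l, rfl⟩ := hy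
  exact Int.modEq_iff_dvd.2 ⟨k * l, by ring⟩

theorem Int.add_add_add_modEq_three_add_mul {x₁ x₂ x₃ x₄ : ℤ} (h₁ : Odd x₁) (h₂ : Odd x₂)
    (h₃ : Odd x₃) (h₄ : Odd x₄) : x₁ + x₂ + x₃ + x₄ ≡ 3 + x₁ * x₂ * x₃ * x₄ [ZMOD 4] := by
  have h₁₂ := Int.add_modEq_one_add_mul h₁ h₂
  have h₃₄ := Int.add_modEq_one_add_mul h₃ h₄
  have h := Int.add_modEq_one_add_mul (h₁.mul h₂) (h₃.mul h₄)
  calc x₁ + x₂ + x₃ + x₄ = (x₁ + x₂) + (x₃ + x₄) := by ring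
    _ ≡ (1 + x₁ * x₂) + (1 + x₃ * x₄) [ZMOD 4] := h₁₂.add h₃₄
    _ = 2 + (x₁ * x₂ + x₃ * x₄) := by ring
    _ ≡ 2 + (1 + x₁ * x₂ * (x₃ * x₄)) [ZMOD 4] := h.add_left 2
    _ = 3 + x₁ * x₂ * x₃ * x₄ := by ring

theorem IsUnit.int_odd {u : ℤ} (hu : IsUnit u) : Odd u := by
  rcases Int.isUnit_iff.1 hu with rfl | rfl <;> decide

theorem Int.eq_neg_of_sub_modEq_two {u v : ℤ} (hu : IsUnit u) (hv : IsUnit v)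
    (h : u - v ≡ 2 [ZMOD 4]) : u = -v := by
  rcases Int.isUnit_iff.1 hu with rfl | rfl <;> rcases Int.isUnit_iff.1 hv with rfl | rfl <;>
    revert h <;> decide

theorem ZMod.add_self_injective {n : ℕ} (hn : Odd n) :
    Function.Injective fun x : ZMod n => x + x := by
  have h2 : IsUnit (2 : ZMod n) := by
    exact_mod_cast (ZMod.isUnit_iff_coprime 2 n).2 (Nat.coprime_two_left.2 hn)
  intro x y hxy
  exact h2.mul_left_cancel (by linear_combination hxy)

section Autocorrelation

variable {G : Type*} [AddCommGroup G] [Fintype G] [DecidableEq G] {f : G → ℤ}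

theorem sum_mul_add_modEq (heven : ∀ x, f (-x) = f x) (hunit : ∀ x, IsUnit (f x)) {s z : G}
    (hz : ∀ x, x + x + s = 0 ↔ x = z) :
    ∑ x, f x * f (x + s) ≡ 2 * ∑ x, f x - Fintype.card G + 2 - 2 * f z [ZMOD 8] := by
  have hshift : ∑ x, f (x + s) = ∑ x, f x := Equiv.sum_comp (Equiv.addRight s) f
  have hsplit : ∑ x, f x * f (x + s) =
      ∑ x, (f x - 1) * (f (x + s) - 1) + 2 * ∑ x, f x - Fintype.card G := by
    have : ∀ x, f x * f (x + s) = (f x - 1) * (f (x + s) - 1) + f x + f (x + s) - 1 :=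
      fun x => by ring
    simp only [this, sum_sub_distrib, sum_add_distrib, hshift, sum_const, card_univ, nsmul_eq_mul,
      mul_one]
    ring
  have hzs : z + s = -z := eq_neg_of_add_eq_zero_left (by rw [add_right_comm]; exact (hz z).2 rfl)
  have hpairs : ∑ x, ((f x : ZMod 8) - 1) * ((f (x + s) : ZMod 8) - 1) = 2 - 2 * f z := by
    have hinv : Function.Involutive fun x : G => -x - s := fun x => by
      show -(-x - s) - s = x
      abel
    have hfix : ∀ x, -x - s = x ↔ x = z := fun x => by
      rw [← hz, ← sub_eq_zero, show -x - s - x = -(x + x + s) by abel, neg_eq_zero]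
    rw [Fintype.sum_eq_apply_of_involutive hinv hfix ?_]
    · rw [hzs, heven]
      have hsq := congrArg (Int.cast : ℤ → ZMod 8) (Int.isUnit_mul_self (hunit z))
      push_cast at hsq
      linear_combination hsq
    intro x _
    obtain ⟨k, hk⟩ := (hunit x).int_odd
    obtain ⟨l, hl⟩ := (hunit (x + s)).int_odd
    have h8 : (8 : ZMod 8) = 0 := rfl
    rw [show -x - s + s = -x by abel, show -x - s = -(x + s) by abel, heven, heven, hk, hl]
    push_cast
    linear_combination ((k : ZMod 8) * l) * h8
  rw [hsplit]
  apply (ZMod.intCast_eq_intCast_iff _ _ 8).1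
  push_cast
  rw [hpairs]
  ring

end Autocorrelation

theorem PMOne.isUnit {n k : ℕ} {a : ℕ → ℤ} (ha : PMOne n a) (hk : k < n) : IsUnit (a k) :=
  Int.isUnit_iff.2 (ha k hk)

theorem PMOne.odd {n k : ℕ} {a : ℕ → ℤ} (ha : PMOne n a) (hk : k < n) : Odd (a k) :=
  (ha.isUnit hk).int_odd

theorem SymmSeq.add {n : ℕ} {a b : ℕ → ℤ} (ha : SymmSeq n a) (hb : SymmSeq n b) :
    SymmSeq n (a + b) := fun i h1 h2 => by simp only [Pi.add_apply, ha i h1 h2, hb i h1 h2]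

section ZModIndex

variable {n : ℕ} [NeZero n]

theorem sum_range_eq_sum_zmod (a : ℕ → ℤ) : ∑ k ∈ range n, a k = ∑ x : ZMod n, a x.val := by
  refine sum_nbij' (fun k => (k : ZMod n)) (fun x => x.val) (fun _ _ => mem_univ _)
    (fun x _ => mem_range.2 x.val_lt) (fun k hk => ZMod.val_cast_of_lt (mem_range.1 hk))
    (fun x _ => ZMod.natCast_zmod_val x) (fun k hk => ?_)
  rw [ZMod.val_cast_of_lt (mem_range.1 hk)]

theorem paf_eq_sum_zmod (a : ℕ → ℤ) (s : ℕ) :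
    paf n a s = ∑ x : ZMod n, a x.val * a (x + s).val := by
  rw [paf, sum_range_eq_sum_zmod]
  refine sum_congr rfl fun x _ => ?_
  rw [← ZMod.val_natCast, Nat.cast_add, ZMod.natCast_zmod_val]

theorem SymmSeq.apply_neg_val {a : ℕ → ℤ} (ha : SymmSeq n a) (x : ZMod n) :
    a (-x).val = a x.val := by
  rcases eq_or_ne x 0 with rfl | hx
  · rw [neg_zero]
  · rw [ZMod.neg_val, if_neg hx]
    exact (ha x.val (Nat.one_le_iff_ne_zero.2 ((ZMod.val_ne_zero x).2 hx)) x.val_lt).symm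

end ZModIndex

theorem SymmSeq.paf_modEq {n s z : ℕ} {a : ℕ → ℤ} (hn : Odd n) (ha : SymmSeq n a)
    (hpm : PMOne n a) (hz : z < n) (hzs : n ∣ 2 * z + s) :
    paf n a s ≡ 2 * ∑ k ∈ range n, a k - n + 2 - 2 * a z [ZMOD 8] := by
  have : NeZero n := ⟨hn.pos.ne'⟩
  have hz0 : (z : ZMod n) + z + s = 0 := by
    rw [← two_mul]
    exact_mod_cast (ZMod.natCast_eq_zero_iff _ n).2 hzs
  have hfix : ∀ x : ZMod n, x + x + s = 0 ↔ x = z := fun x =>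
    ⟨fun h => ZMod.add_self_injective hn (by linear_combination h - hz0), fun h => h ▸ hz0⟩
  have := sum_mul_add_modEq (f := fun x : ZMod n => a x.val) ha.apply_neg_val
    (fun x => hpm.isUnit x.val_lt) hfix
  rw [paf_eq_sum_zmod, sum_range_eq_sum_zmod]
  rwa [ZMod.card, ZMod.val_cast_of_lt hz] at this

theorem SymmSeq.sum_range_modEq {n : ℕ} {e : ℕ → ℤ} (hn : Odd n) (he : SymmSeq n e)
    (heven : ∀ k < n, Even (e k)) : ∑ k ∈ range n, e k ≡ e 0 [ZMOD 4] := by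
  have : NeZero n := ⟨hn.pos.ne'⟩
  rw [sum_range_eq_sum_zmod]
  apply (ZMod.intCast_eq_intCast_iff _ _ 4).1
  push_cast
  rw [Fintype.sum_eq_apply_of_involutive (σ := Neg.neg) neg_involutive (z := 0)
    (fun x => by rw [neg_eq_iff_add_eq_zero, (ZMod.add_self_injective hn).eq_iff' (add_zero 0)])
    fun x _ => ?_, ZMod.val_zero]
  obtain ⟨r, hr⟩ := heven _ x.val_lt
  have h4 : (4 : ZMod 4) = 0 := rfl
  rw [he.apply_neg_val, hr]
  push_cast
  linear_combination (r : ZMod 4) * h4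

theorem exists_shift_le_half {n i : ℕ} (hi : 1 ≤ i) (hin : 2 * i < n) :
    ∃ s z, 1 ≤ s ∧ s ≤ n / 2 ∧ z < n ∧ n ∣ 2 * z + s ∧ (z = i ∨ z + i = n) := by
  rcases le_or_gt (2 * i) (n / 2) with h | h
  · exact ⟨2 * i, n - i, by omega, h, by omega, ⟨2, by omega⟩, Or.inr (by omega)⟩
  · exact ⟨n - 2 * i, i, by omega, by omega, by omega, ⟨1, by omega⟩, Or.inl rfl⟩

theorem williamson_product_odd (n : ℕ) (hodd : Odd n) (a b c d : ℕ → ℤ)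
    (hW : IsWilliamson n a b c d) :
    ∀ i, 1 ≤ i → 2 * i < n →
      a i * b i * c i * d i = -(a 0 * b 0 * c 0 * d 0) := by
  intro i hi hin
  obtain ⟨sa, sb, sc, sd, pa, pb, pc, pd, hpaf⟩ := hW
  obtain ⟨s, z, hs, hsn, hz, hzs, hzi⟩ := exists_shift_le_half hi hin
  have hpaf_modEq : ∀ e, SymmSeq n e → PMOne n e →
      paf n e s ≡ 2 * ∑ k ∈ range n, e k - n + 2 - 2 * e i [ZMOD 8] := by
    intro e he hpe
    convert he.paf_modEq hodd hpe hz hzs using 3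
    rcases hzi with rfl | hzi
    · rfl
    · rw [he i hi (by omega), ← hzi, Nat.add_sub_cancel]
  have hsum := (((sa.add sb).add sc).add sd).sum_range_modEq hodd fun k hk =>
    (((pa.odd hk).add_odd (pb.odd hk)).add_odd (pc.odd hk)).add_odd (pd.odd hk)
  simp only [Pi.add_apply, sum_add_distrib] at hsum
  have hparity : ∀ k < n, a k + b k + c k + d k ≡ 3 + a k * b k * c k * d k [ZMOD 4] :=
    fun k hk => Int.add_add_add_modEq_three_add_mul (pa.odd hk) (pb.odd hk) (pc.odd hk) (pd.odd hk)
  have hunit : ∀ k < n, IsUnit (a k * b k * c k * d k) := fun k hk =>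
    (((pa.isUnit hk).mul (pb.isUnit hk)).mul (pc.isUnit hk)).mul (pd.isUnit hk)
  refine Int.eq_neg_of_sub_modEq_two (hunit i (by omega)) (hunit 0 hodd.pos) ?_
  have := hpaf s hs hsn
  have := hpaf_modEq a sa pa
  have := hpaf_modEq b sb pb
  have := hpaf_modEq c sc pc
  have := hpaf_modEq d sd pd
  have := hparity i (by omega)
  have := hparity 0 hodd.pos
  have := Nat.odd_iff.1 hodd
  unfold Int.ModEq at *
  omega
end

section
/- Let A and B be sequences of length n with entries in the integers, and let A ж B denote their interleaving, a sequence of length 2n. Then for every integer s, PAF_{A ж B}(2s) = PAF_A(s) + PAF_B(s), where the PAF of A ж B is computed with period 2n and the PAFs of A and B are computed with period n. -/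
/-!
Splitting the sum over `k < 2n` by the parity of `k`: a shift by `2s` modulo `2n` keeps the parity
of an index and acts on `2k + r` as the shift by `s` modulo `n` acts on `k`. Hence the PAF of a
length-`2n` sequence at `2s` is the sum of the PAFs of its even and odd subsequences at `s`, and
for `A ж B` these subsequences are `A` and `B`.
-/

/-- The periodic autocorrelation function of the length-`n` integer sequence `a`,
with integer argument `s`: `PAF_a(s) = ∑_{k=0}^{n-1} a_k · a_{(k+s) mod n}`. -/
def pafZ (n : ℕ) (a : ℕ → ℤ) (s : ℤ) : ℤ :=
  ∑ k ∈ Finset.range n, a k * a ((((k : ℤ) + s) % (n : ℤ)).toNat)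

/-- The interleaving `a ж b` of two length-`n` sequences, of length `2n`:
`[a₀, b₀, a₁, b₁, …]`. -/
def interleave (a b : ℕ → ℤ) (i : ℕ) : ℤ :=
  if i % 2 = 0 then a (i / 2) else b (i / 2)

open Finset

theorem Int.mul_add_emod_mul_of_lt {m r : ℤ} (x n : ℤ) (hr : 0 ≤ r) (hrm : r < m) :
    (m * x + r) % (m * n) = m * (x % n) + r := by
  rcases eq_or_ne n 0 with rfl | hn
  · simp
  have hm : 0 < m := hr.trans_lt hrm
  rw [Int.emod_eq_iff (mul_ne_zero hm.ne' hn)]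
  have h0 : 0 ≤ x % n := Int.emod_nonneg x hn
  have h1 : x % n < |n| := Int.emod_lt_abs x hn
  refine ⟨by positivity, ?_, ⟨-(x / n), ?_⟩⟩
  · rw [Int.natCast_natAbs, abs_mul, abs_of_pos hm]
    nlinarith
  · linear_combination m * Int.emod_add_mul_ediv x n

theorem Finset.sum_range_two_mul {M : Type*} [AddCommMonoid M] (n : ℕ) (f : ℕ → M) :
    ∑ i ∈ range (2 * n), f i = ∑ i ∈ range n, f (2 * i) + ∑ i ∈ range n, f (2 * i + 1) := by
  induction n with
  | zero => simp
  | succ n ih =>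
    rw [Nat.mul_succ, sum_range_succ, sum_range_succ, ih, sum_range_succ, sum_range_succ]
    abel

theorem pafZ_two_mul_two_mul (n : ℕ) (c : ℕ → ℤ) (s : ℤ) :
    pafZ (2 * n) c (2 * s) = pafZ n (fun i => c (2 * i)) s + pafZ n (fun i => c (2 * i + 1)) s := by
  have index (k r : ℕ) (hk : k < n) (hr : r < 2) :
      ((((2 * k + r : ℕ) : ℤ) + 2 * s) % ((2 * n : ℕ) : ℤ)).toNat
        = 2 * (((k : ℤ) + s) % n).toNat + r := by
    have h0 : 0 ≤ ((k : ℤ) + s) % n := Int.emod_nonneg _ (by omega)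
    push_cast
    rw [show 2 * (k : ℤ) + r + 2 * s = 2 * (k + s) + r by ring,
      Int.mul_add_emod_mul_of_lt _ _ (by omega) (by omega)]
    omega
  unfold pafZ
  rw [sum_range_two_mul]
  congr 1 <;> refine sum_congr rfl fun k hk => ?_
  · have even := index k 0 (mem_range.1 hk) two_pos
    simp only [add_zero] at even
    rw [even]
  · rw [index k 1 (mem_range.1 hk) one_lt_two]

theorem interleave_two_mul (a b : ℕ → ℤ) (i : ℕ) : interleave a b (2 * i) = a i := by
  simp [interleave]

theorem interleave_two_mul_add_one (a b : ℕ → ℤ) (i : ℕ) : interleave a b (2 * i + 1) = b i := by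
  simp [interleave, Nat.mul_add_div]

theorem paf_interleave (n : ℕ) (a b : ℕ → ℤ) (s : ℤ) :
    pafZ (2 * n) (interleave a b) (2 * s) = pafZ n a s + pafZ n b s := by
  simp only [pafZ_two_mul_two_mul, interleave_two_mul, interleave_two_mul_add_one]
end

section
/- Let n be even and let A, B, C, D be a Williamson sequence of order n. Let Ã be the cyclic shift of A by offset n/2, i.e., ã_i = a_{(i+n/2) mod n}. Then Ã, B, C, D is a Williamson sequence of order n (in particular, Ã is again symmetric). -/
/-- The cyclic shift of the length-`n` sequence `a` by offset `r`:
its `i`-th entry is `a_{(i+r) mod n}`. -/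
def cshift (n r : ℕ) (a : ℕ → ℤ) (i : ℕ) : ℤ := a ((i + r) % n)

/-! Cyclic shifts preserve every periodic autocorrelation, since they only reindex the sum
defining it. A symmetric sequence is constant on each pair `{i, -i}` of `ℤ/n`, and shifting
by `r` maps the pair `{i, -i}` onto `{i + r, -i + r}`, which is again of this form when
`2r ≡ 0 (mod n)`; for even `n` this is the case for `r = n/2`. -/

theorem Finset.sum_range_comp_add_mod {M : Type*} [AddCommMonoid M] (n r : ℕ) (f : ℕ → M) :
    ∑ k ∈ range n, f ((k + r) % n) = ∑ k ∈ range n, f k := by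
  rcases n.eq_zero_or_pos with rfl | hn
  · simp
  have : NeZero n := NeZero.of_pos hn
  rw [← Fin.sum_univ_eq_sum_range (fun k => f ((k + r) % n)), ← Fin.sum_univ_eq_sum_range]
  exact Fintype.sum_equiv (Equiv.addRight (Fin.ofNat n r)) _ _
    fun k => by simp [Fin.val_add]

theorem paf_cshift (n r s : ℕ) (a : ℕ → ℤ) : paf n (cshift n r a) s = paf n a s := by
  have hmod : ∀ k, ((k + s) % n + r) % n = ((k + r) % n + s) % n := fun k => by
    rw [Nat.mod_add_mod, Nat.mod_add_mod, Nat.add_right_comm]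
  simp only [paf, cshift, hmod]
  exact Finset.sum_range_comp_add_mod n r fun k => a k * a ((k + s) % n)

theorem SymmSeq.apply_mod_eq_of_add_mod_eq_zero {n : ℕ} {a : ℕ → ℤ} (ha : SymmSeq n a)
    {i j : ℕ} (hij : (i + j) % n = 0) : a (i % n) = a (j % n) := by
  rcases n.eq_zero_or_pos with rfl | hn
  · simp only [Nat.mod_zero] at hij ⊢
    rw [Nat.eq_zero_of_add_eq_zero_left hij, Nat.eq_zero_of_add_eq_zero_right hij]
  have hi := Nat.mod_lt i hn
  have hj := Nat.mod_lt j hn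
  rw [Nat.add_mod] at hij
  obtain hi0 | hipos := (i % n).eq_zero_or_pos
  · rw [hi0, zero_add, Nat.mod_mod] at hij
    rw [hi0, hij]
  have hsum : i % n + j % n = n := by
    by_cases hlt : i % n + j % n < n
    · rw [Nat.mod_eq_of_lt hlt] at hij
      omega
    · rw [Nat.mod_eq_sub_mod (not_lt.1 hlt), Nat.mod_eq_of_lt (by omega)] at hij
      omega
  rw [show j % n = n - i % n by omega]
  exact ha _ hipos hi

theorem SymmSeq.cshift {n r : ℕ} {a : ℕ → ℤ} (ha : SymmSeq n a) (hr : n ∣ 2 * r) :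
    SymmSeq n (cshift n r a) := by
  intro i _ hin
  refine ha.apply_mod_eq_of_add_mod_eq_zero (Nat.mod_eq_zero_of_dvd ?_)
  rw [show i + r + (n - i + r) = n + 2 * r by omega]
  exact Nat.dvd_add_self_left.2 hr

theorem PMOne.cshift {n : ℕ} {a : ℕ → ℤ} (ha : PMOne n a) (r : ℕ) : PMOne n (cshift n r a) :=
  fun _ hi => ha _ (Nat.mod_lt _ (Nat.zero_lt_of_lt hi))

theorem williamson_half_shift (n : ℕ) (heven : Even n) (a b c d : ℕ → ℤ)
    (hW : IsWilliamson n a b c d) :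
    IsWilliamson n (cshift n (n / 2) a) b c d := by
  obtain ⟨hsa, hsb, hsc, hsd, hpa, hpb, hpc, hpd, hpaf⟩ := hW
  have hdvd : n ∣ 2 * (n / 2) := by rw [Nat.two_mul_div_two_of_even heven]
  refine ⟨hsa.cshift hdvd, hsb, hsc, hsd, hpa.cshift _, hpb, hpc, hpd, fun s hs1 hs2 => ?_⟩
  rw [paf_cshift]
  exact hpaf s hs1 hs2
end

section
/- Let n be even and let A, B, C, D be a Williamson sequence of order n. Define Ã, B̃, C̃, D̃ by negating every second entry of each sequence simultaneously, i.e., x̃_i = (−1)^i · x_i for each of the four sequences. Then Ã, B̃, C̃, D̃ is a Williamson sequence of order n (in particular, each of Ã, B̃, C̃, D̃ is again symmetric). -/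
/-!
For even `n`, reducing an index mod `n` preserves its parity, so the term `a_k a_{(k+s) mod n}`
of `PAF(s)` picks up the sign `(-1)^k (-1)^(k+s) = (-1)^s`. Thus alternating negation multiplies
every `PAF(s)`, and hence the Williamson sum, by `(-1)^s`. Symmetry survives because
`n - i ≡ i (mod 2)`.
-/

def alternate (a : ℕ → ℤ) (i : ℕ) : ℤ := (-1) ^ i * a i

section NegOnePow

variable {R : Type*} [Monoid R] [HasDistribNeg R] {n : ℕ}

theorem neg_one_pow_mod_of_even (hn : Even n) (m : ℕ) : (-1 : R) ^ (m % n) = (-1) ^ m := by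
  conv_rhs => rw [← Nat.div_add_mod m n, pow_add, (hn.mul_right _).neg_one_pow, one_mul]

theorem neg_one_pow_sub_of_even (hn : Even n) {i : ℕ} (hi : i ≤ n) :
    (-1 : R) ^ (n - i) = (-1) ^ i := by
  calc (-1 : R) ^ (n - i) = (-1) ^ (n - i + 2 * i) := by rw [pow_add, pow_mul]; simp
    _ = (-1) ^ (n + i) := by congr 1; omega
    _ = (-1) ^ i := by rw [pow_add, hn.neg_one_pow, one_mul]

end NegOnePow

theorem SymmSeq.alternate {n : ℕ} {a : ℕ → ℤ} (hn : Even n) (h : SymmSeq n a) :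
    SymmSeq n (alternate a) := fun i h1 h2 => by
  rw [_root_.alternate, _root_.alternate, h i h1 h2, neg_one_pow_sub_of_even hn h2.le]

theorem PMOne.alternate {n : ℕ} {a : ℕ → ℤ} (h : PMOne n a) : PMOne n (alternate a) :=
  fun i hi => by
  rcases neg_one_pow_eq_or ℤ i with hs | hs <;> rcases h i hi with ha | ha <;>
    simp [_root_.alternate, hs, ha]

theorem paf_alternate {n : ℕ} (hn : Even n) (a : ℕ → ℤ) (s : ℕ) :
    paf n (alternate a) s = (-1) ^ s * paf n a s := by
  rw [paf, paf, Finset.mul_sum]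
  refine Finset.sum_congr rfl fun k _ => ?_
  have hsign : (-1 : ℤ) ^ k * (-1) ^ (k + s) = (-1) ^ s := by
    rw [← pow_add, ← add_assoc, ← two_mul, pow_add, pow_mul]; simp
  rw [alternate, alternate, neg_one_pow_mod_of_even hn, ← hsign]
  ring

theorem williamson_alternating_negation (n : ℕ) (heven : Even n) (a b c d : ℕ → ℤ)
    (hW : IsWilliamson n a b c d) :
    IsWilliamson n
      (fun i => (-1 : ℤ) ^ i * a i) (fun i => (-1 : ℤ) ^ i * b i)
      (fun i => (-1 : ℤ) ^ i * c i) (fun i => (-1 : ℤ) ^ i * d i) := by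
  obtain ⟨sa, sb, sc, sd, pa, pb, pc, pd, hpaf⟩ := hW
  refine ⟨sa.alternate heven, sb.alternate heven, sc.alternate heven, sd.alternate heven,
    pa.alternate, pb.alternate, pc.alternate, pd.alternate, fun s h1 h2 => ?_⟩
  change paf n (alternate a) s + paf n (alternate b) s + paf n (alternate c) s +
    paf n (alternate d) s = 0
  simp only [paf_alternate heven, ← mul_add, hpaf s h1 h2, mul_zero]
end
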